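/- arXiv:1904.12233 — 8 statements merged into one kernel-verified Lean document; each statement's English description precedes it below -/
import Mathlib

section
/- Let w : [K] → ℝ_{>0} be positive weights with the arms ordered so that w(1) ≥ (1/2)·max_i w(i). Let ε ∈ [ (1/4)·(max_{i≠1} w(i))/w(1), min( (max_{i≠1} w(i))/w(1), 1/2 ) ]. Define Q({a,b}) = w(a)w(b)/Z for distinct a,b, where Z = (1/2)·∑_{a≠b} w(a)w(b), and define P on ordered pairs by P((i,j)) = (1/2)Q({i,j}) if 1 ∉ {i,j}, P((1,i)) = (1-ε)Q({1,i}), P((i,1)) = ε·Q({1,i}). Let p^A(a) = ∑_{b≠a} P((a,b)). Then p^A(1) ≥ 1 - 5Kε. -/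
/-- Lemma (easy probability calculation): with the biased assignment rule with
dominating arm `0`, the first player's marginal satisfies `p^A(0) ≥ 1 - 5Kε`. -/
theorem stmt1 {K : ℕ} [NeZero K] (hK : 2 ≤ K) (w : Fin K → ℝ) (hw : ∀ i, 0 < w i)
    (h1 : (Finset.univ : Finset (Fin K)).Nonempty)
    (h2 : (Finset.univ.erase (0 : Fin K)).Nonempty)
    (hdom : (1 / 2) * Finset.univ.sup' h1 w ≤ w 0)
    (ε : ℝ)
    (hεlb : (1 / 4) * ((Finset.univ.erase (0 : Fin K)).sup' h2 w / w 0) ≤ ε)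
    (hεub : ε ≤ min ((Finset.univ.erase (0 : Fin K)).sup' h2 w / w 0) (1 / 2))
    (Z : ℝ) (hZ : Z = ∑ a, ∑ b ∈ Finset.univ.erase a, w a * w b)
    (Q : Fin K → Fin K → ℝ) (hQ : ∀ a b, Q a b = 2 * w a * w b / Z)
    (P : Fin K → Fin K → ℝ)
    (hP1 : ∀ i, i ≠ 0 → P 0 i = (1 - ε) * Q 0 i)
    (hP2 : ∀ i, i ≠ 0 → P i 0 = ε * Q 0 i)
    (hP3 : ∀ i j, i ≠ 0 → j ≠ 0 → i ≠ j → P i j = (1 / 2) * Q i j)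
    (pA : Fin K → ℝ) (hpA : ∀ a, pA a = ∑ b ∈ Finset.univ.erase a, P a b) :
    1 - 5 * K * ε ≤ pA 0 := by
  set M := (Finset.univ.erase (0 : Fin K)).sup' h2 w with hM
  set S := ∑ b ∈ Finset.univ.erase (0 : Fin K), w b with hS
  set W := ∑ b, w b with hWdef
  have hw0 : 0 < w 0 := hw 0
  obtain ⟨i0, hi0⟩ := h2
  have hMpos : 0 < M := lt_of_lt_of_le (hw i0) (Finset.le_sup' w hi0)
  have hSpos : 0 < S := Finset.sum_pos (fun i _ => hw i) ⟨i0, hi0⟩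
  have hε0 : 0 ≤ ε := le_trans (by positivity) hεlb
  have hε12 : ε ≤ 1 / 2 := le_trans hεub (min_le_right _ _)
  have hM4 : M ≤ 4 * ε * w 0 := by
    have h : M / w 0 ≤ 4 * ε := by linarith
    have := (div_le_iff₀ hw0).mp h
    linarith
  -- S ≤ (K-1) * M
  have hSle : S ≤ ((K : ℝ) - 1) * M := by
    have hcard : (Finset.univ.erase (0 : Fin K)).card = K - 1 := by
      rw [Finset.card_erase_of_mem (Finset.mem_univ _), Finset.card_univ, Fintype.card_fin]
    have h := Finset.sum_le_card_nsmul (Finset.univ.erase (0 : Fin K)) w M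
      (fun i hi => Finset.le_sup' w hi)
    rw [hcard, nsmul_eq_mul] at h
    have hcast : ((K - 1 : ℕ) : ℝ) = (K : ℝ) - 1 := by
      rw [Nat.cast_sub (by omega)]; simp
    rw [hcast] at h
    exact h
  -- decompose Z
  have hZ2 : Z = W * W - ∑ a, w a * w a := by
    rw [hZ]
    have : ∀ a : Fin K, ∑ b ∈ Finset.univ.erase a, w a * w b = w a * W - w a * w a := by
      intro a
      rw [← Finset.mul_sum, Finset.sum_erase_eq_sub (Finset.mem_univ a)]
      ring
    rw [Finset.sum_congr rfl (fun a _ => this a), Finset.sum_sub_distrib, ← Finset.sum_mul]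
  have hWsplit : W = w 0 + S := by
    rw [hWdef, hS, ← Finset.add_sum_erase _ w (Finset.mem_univ (0 : Fin K))]
  have hsqsplit : ∑ a, w a * w a
      = w 0 * w 0 + ∑ a ∈ Finset.univ.erase (0 : Fin K), w a * w a := by
    rw [← Finset.add_sum_erase _ (fun a => w a * w a) (Finset.mem_univ (0 : Fin K))]
  set Q2 := ∑ a ∈ Finset.univ.erase (0 : Fin K), w a * w a with hQ2def
  have hZ3 : Z = 2 * w 0 * S + (S * S - Q2) := by
    rw [hZ2, hWsplit, hsqsplit]; ring
  -- bounds on U = S*S - Q2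
  have hQ2nonneg : 0 ≤ Q2 := Finset.sum_nonneg (fun a _ => by nlinarith [hw a])
  have hUge : 0 ≤ S * S - Q2 := by
    have h : Q2 ≤ S * S := by
      have hle : ∀ a ∈ Finset.univ.erase (0 : Fin K), w a * w a ≤ w a * S := by
        intro a ha
        have : w a ≤ S := Finset.single_le_sum (fun i _ => (hw i).le) ha
        nlinarith [hw a]
      calc Q2 ≤ ∑ a ∈ Finset.univ.erase (0 : Fin K), w a * S := Finset.sum_le_sum hle
        _ = S * S := by rw [← Finset.sum_mul]
    linarith
  have hZpos : 0 < Z := by rw [hZ3]; nlinarith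
  -- compute pA 0
  have hpA0 : pA 0 = (1 - ε) * (2 * w 0 * S) / Z := by
    rw [hpA]
    have h : ∀ b ∈ Finset.univ.erase (0 : Fin K),
        P 0 b = (1 - ε) * (2 * w 0) / Z * w b := by
      intro b hb
      rw [hP1 b (Finset.ne_of_mem_erase hb), hQ]
      field_simp
    rw [Finset.sum_congr rfl h, ← Finset.mul_sum, ← hS]
    ring
  rw [hpA0, le_div_iff₀ hZpos]
  have hKR : (2 : ℝ) ≤ (K : ℝ) := by exact_mod_cast hK
  have hUbound : S * S - Q2 ≤ S * (((K : ℝ) - 1) * (4 * ε * w 0)) := by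
    have ha : S * S ≤ S * (((K : ℝ) - 1) * M) := mul_le_mul_of_nonneg_left hSle hSpos.le
    have hb : ((K : ℝ) - 1) * M ≤ ((K : ℝ) - 1) * (4 * ε * w 0) :=
      mul_le_mul_of_nonneg_left hM4 (by linarith)
    have hc : S * (((K : ℝ) - 1) * M) ≤ S * (((K : ℝ) - 1) * (4 * ε * w 0)) :=
      mul_le_mul_of_nonneg_left hb hSpos.le
    linarith
  rw [hZ3]
  have hKeu : 0 ≤ (K : ℝ) * ε * (S * S - Q2) :=
    mul_nonneg (mul_nonneg (by linarith) hε0) hUge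
  have hews : 0 ≤ ε * (w 0 * S) := mul_nonneg hε0 (mul_pos hw0 hSpos).le
  have hKews : 0 ≤ (K : ℝ) * (ε * (w 0 * S)) := mul_nonneg (by linarith) hews
  linarith [hUbound, hUge, hKeu, hews, hKews]
end

section
/- Let w : [K] → ℝ_{>0} with w(1) ≥ (1/2)max_i w(i), and let ε satisfy (1/4)·(max_{i≠1} w(i))/w(1) ≤ ε ≤ min((max_{i≠1} w(i))/w(1), 1/2). Define P((i,j)) = (1/2)Q({i,j}) for 1 ∉ {i,j}, P((1,i)) = (1-ε)Q({1,i}), P((i,1)) = ε Q({1,i}), where Q({a,b}) = 2w(a)w(b)/Z and Z = ∑_{a≠b} w(a)w(b). Let p^A(a) = ∑_{b≠a}P((a,b)). Then the variance term V := ∑_a p^A(a) ∑_{b≠a} ∑_{a',b'} Q({a',b})·P((a,b'))/P((a,b)) satisfies V ≤ 64K. -/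
set_option maxHeartbeats 2000000 in
/-- Variance control for the biased assignment rule with dominating arm `0`:
`V := ∑_a p^A(a) ∑_{b≠a} ∑_{a'≠b} ∑_{b'≠a} Q({a',b}) P((a,b')) / P((a,b)) ≤ 64 K`. -/
theorem stmt3 {K : ℕ} [NeZero K] (hK : 2 ≤ K) (w : Fin K → ℝ) (hw : ∀ i, 0 < w i)
    (h1 : (Finset.univ : Finset (Fin K)).Nonempty)
    (h2 : (Finset.univ.erase (0 : Fin K)).Nonempty)
    (hdom : (1 / 2) * Finset.univ.sup' h1 w ≤ w 0)
    (ε : ℝ)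
    (hεlb : (1 / 4) * ((Finset.univ.erase (0 : Fin K)).sup' h2 w / w 0) ≤ ε)
    (hεub : ε ≤ min ((Finset.univ.erase (0 : Fin K)).sup' h2 w / w 0) (1 / 2))
    (Z : ℝ) (hZ : Z = ∑ a, ∑ b ∈ Finset.univ.erase a, w a * w b)
    (Q : Fin K → Fin K → ℝ) (hQ : ∀ a b, Q a b = 2 * w a * w b / Z)
    (P : Fin K → Fin K → ℝ)
    (hP1 : ∀ i, i ≠ 0 → P 0 i = (1 - ε) * Q 0 i)
    (hP2 : ∀ i, i ≠ 0 → P i 0 = ε * Q 0 i)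
    (hP3 : ∀ i j, i ≠ 0 → j ≠ 0 → i ≠ j → P i j = (1 / 2) * Q i j)
    (pA : Fin K → ℝ) (hpA : ∀ a, pA a = ∑ b ∈ Finset.univ.erase a, P a b) :
    ∑ a, pA a *
        ∑ b ∈ Finset.univ.erase a, ∑ a' ∈ Finset.univ.erase b,
          ∑ b' ∈ Finset.univ.erase a, Q a' b * P a b' / P a b ≤
      64 * K := by
  classical
  have hZ' : Z = ∑ a, w a * ((∑ i, w i) - w a) := by
    rw [hZ]
    refine Finset.sum_congr rfl fun a _ => ?_
    rw [← Finset.mul_sum, Finset.sum_erase_eq_sub (Finset.mem_univ a)]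
  set M := (Finset.univ.erase (0 : Fin K)).sup' h2 w with hM_def
  set u := w 0 with hu_def
  set S0 := ∑ i ∈ Finset.univ.erase (0 : Fin K), w i with hS0_def
  set S := ∑ i, w i with hS_def
  have hu : 0 < u := hw 0
  have hS0pos : 0 < S0 := Finset.sum_pos (fun i _ => hw i) h2
  have hMpos : 0 < M := by
    obtain ⟨i, hi⟩ := h2
    exact lt_of_lt_of_le (hw i) (Finset.le_sup' w hi)
  have hSeq : S = u + S0 := (Finset.add_sum_erase _ w (Finset.mem_univ 0)).symm
  have hε0 : 0 < ε := lt_of_lt_of_le (by positivity) hεlb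
  have hε2 : ε ≤ 1 / 2 := le_trans hεub (min_le_right _ _)
  have hεM : ε * u ≤ M := by
    have h := le_trans hεub (min_le_left _ _)
    rw [le_div_iff₀ hu] at h
    linarith
  have hεlb' : M ≤ 4 * (ε * u) := by
    have h : M / u ≤ 4 * ε := by linarith
    rw [div_le_iff₀ hu] at h
    linarith
  have hMS0 : M ≤ S0 :=
    Finset.sup'_le h2 w fun i hi => Finset.single_le_sum (fun j _ => (hw j).le) hi
  have hM2u : M ≤ 2 * u := by
    have h : M ≤ Finset.univ.sup' h1 w :=
      Finset.sup'_le h2 w fun i _ => Finset.le_sup' (f := w) (Finset.mem_univ i)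
    linarith
  have hwS0 : ∀ a ∈ Finset.univ.erase (0 : Fin K), w a ≤ S0 :=
    fun a ha => Finset.single_le_sum (fun j _ => (hw j).le) ha
  have hwleS : ∀ b, w b ≤ S := fun b =>
    Finset.single_le_sum (fun i _ => (hw i).le) (Finset.mem_univ b)
  have hk : (2 : ℝ) ≤ (K : ℝ) := by exact_mod_cast hK
  have hS0K : S0 ≤ ((K : ℝ) - 1) * M := by
    have h := Finset.sum_le_card_nsmul (Finset.univ.erase (0 : Fin K)) w M
      (fun i hi => Finset.le_sup' w hi)
    rw [Finset.card_erase_of_mem (Finset.mem_univ _), Finset.card_univ, Fintype.card_fin,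
      nsmul_eq_mul, Nat.cast_sub (by omega), Nat.cast_one] at h
    exact h
  have hZsplit : Z = u * S0 + ∑ a ∈ Finset.univ.erase (0 : Fin K), w a * (S - w a) := by
    rw [hZ', ← Finset.add_sum_erase _ (fun a => w a * (S - w a)) (Finset.mem_univ (0 : Fin K)),
      hSeq]
    ring
  have hZ1 : 2 * u * S0 ≤ Z := by
    have hsum : ∑ a ∈ Finset.univ.erase (0 : Fin K), w a * u ≤
        ∑ a ∈ Finset.univ.erase (0 : Fin K), w a * (S - w a) := by
      refine Finset.sum_le_sum fun a ha => ?_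
      have h1 := hwS0 a ha
      have h' : u ≤ S - w a := by rw [hSeq]; linarith
      exact mul_le_mul_of_nonneg_left h' (hw a).le
    rw [← Finset.sum_mul] at hsum
    rw [hZsplit]
    nlinarith [hsum]
  have hZ2 : S0 ^ 2 ≤ Z := by
    have hsum : ∑ a ∈ Finset.univ.erase (0 : Fin K), w a * (S - M) ≤
        ∑ a ∈ Finset.univ.erase (0 : Fin K), w a * (S - w a) := by
      refine Finset.sum_le_sum fun a ha => ?_
      have h1 := Finset.le_sup' w ha
      exact mul_le_mul_of_nonneg_left (by linarith) (hw a).le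
    rw [← Finset.sum_mul] at hsum
    rw [hZsplit, hSeq] at *
    nlinarith [hsum, hS0pos, hM2u]
  have hZpos : 0 < Z := lt_of_lt_of_le (by positivity) hZ1
  have hqval : ∀ b, ∑ a' ∈ Finset.univ.erase b, Q a' b = 2 * ((S - w b) * w b) / Z := by
    intro b
    have h : ∀ a' ∈ Finset.univ.erase b, Q a' b = w a' * (2 * w b / Z) := fun a' _ => by
      rw [hQ]; ring
    rw [Finset.sum_congr rfl h, ← Finset.sum_mul, Finset.sum_erase_eq_sub (Finset.mem_univ b),
      ← hS_def]
    ring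
  have hQpos : ∀ a b, 0 < Q a b := fun a b => by
    rw [hQ]
    exact div_pos (mul_pos (mul_pos two_pos (hw a)) (hw b)) hZpos
  have hPpos : ∀ a b, b ≠ a → 0 < P a b := by
    intro a b hba
    by_cases ha : a = 0
    · subst ha
      rw [hP1 b hba]
      have h1 : 0 < 1 - ε := by linarith
      exact mul_pos h1 (hQpos 0 b)
    · by_cases hb : b = 0
      · subst hb
        rw [hP2 a ha]
        exact mul_pos hε0 (hQpos 0 a)
      · rw [hP3 a b ha hb (Ne.symm hba)]
        have := hQpos a b
        linarith
  have hpAnn : ∀ a, 0 ≤ pA a := by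
    intro a
    rw [hpA]
    exact Finset.sum_nonneg fun b hb => (hPpos a b (Finset.ne_of_mem_erase hb)).le
  have hpA0eq : pA 0 = (1 - ε) * (2 * u * S0) / Z := by
    rw [hpA]
    have h : ∀ b ∈ Finset.univ.erase (0 : Fin K), P 0 b = w b * ((1 - ε) * (2 * u) / Z) :=
      fun b hb => by rw [hP1 b (Finset.ne_of_mem_erase hb), hQ, ← hu_def]; ring
    rw [Finset.sum_congr rfl h, ← Finset.sum_mul, ← hS0_def]
    ring
  have hpA0le : pA 0 ≤ 2 * u * S0 / Z := by
    rw [hpA0eq]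
    have hnum : (1 - ε) * (2 * u * S0) ≤ 2 * u * S0 := by nlinarith
    exact div_le_div_of_nonneg_right hnum hZpos.le |>.trans_eq rfl
  have hpAaeq : ∀ a, a ≠ 0 → pA a = (ε * (2 * u) * w a + w a * (S0 - w a)) / Z := by
    intro a ha
    rw [hpA]
    have h0m : (0 : Fin K) ∈ Finset.univ.erase a :=
      Finset.mem_erase.mpr ⟨Ne.symm ha, Finset.mem_univ _⟩
    rw [← Finset.add_sum_erase _ _ h0m]
    have hPa0 : P a 0 = ε * (2 * u) * w a / Z := by
      rw [hP2 a ha, hQ, ← hu_def]; ring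
    have h : ∀ b ∈ (Finset.univ.erase a).erase 0, P a b = w b * (w a / Z) := by
      intro b hb
      have hb0 : b ≠ 0 := Finset.ne_of_mem_erase hb
      have hba : b ≠ a := Finset.ne_of_mem_erase (Finset.mem_of_mem_erase hb)
      rw [hP3 a b ha hb0 (Ne.symm hba), hQ]; ring
    rw [Finset.sum_congr rfl h, ← Finset.sum_mul, hPa0]
    have hsum : ∑ b ∈ (Finset.univ.erase a).erase 0, w b = S0 - w a := by
      rw [Finset.erase_right_comm,
        Finset.sum_erase_eq_sub (Finset.mem_erase.mpr ⟨ha, Finset.mem_univ a⟩), ← hS0_def]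
    rw [hsum]
    ring
  have hpAale : ∀ a, a ≠ 0 → pA a ≤ 3 * w a * S0 / Z := by
    intro a ha
    rw [hpAaeq a ha]
    have h1 : ε * (2 * u) + (S0 - w a) ≤ 3 * S0 := by
      have := hw a
      linarith
    have h2 := mul_le_mul_of_nonneg_left h1 (hw a).le
    have hnum : ε * (2 * u) * w a + w a * (S0 - w a) ≤ 3 * w a * S0 := by linarith [h2]
    exact div_le_div_of_nonneg_right hnum hZpos.le
  have hSpos : 0 < S := by rw [hSeq]; linarith
  -- per-pair bounds
  have hbound1 : ∀ b ∈ Finset.univ.erase (0 : Fin K),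
      pA 0 * (2 * ((S - w b) * w b) / Z * (pA 0 / P 0 b)) ≤ 8 * u * S0 ^ 2 * S / Z ^ 2 := by
    intro b hb
    have hb0 : b ≠ 0 := Finset.ne_of_mem_erase hb
    have hwb : 0 < w b := hw b
    have hpA0nn : 0 ≤ pA 0 := hpAnn 0
    have hP0bpos : 0 < P 0 b := hPpos 0 b hb0
    have hP0b : P 0 b = (1 - ε) * (2 * u * w b / Z) := by
      rw [hP1 b hb0, hQ, ← hu_def]
    have hPlb : u * w b / Z ≤ P 0 b := by
      rw [hP0b]
      have h12 : (1 : ℝ) / 2 ≤ 1 - ε := by linarith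
      have hx : (0 : ℝ) ≤ 2 * u * w b / Z := by positivity
      calc u * w b / Z = 1 / 2 * (2 * u * w b / Z) := by ring
        _ ≤ (1 - ε) * (2 * u * w b / Z) := mul_le_mul_of_nonneg_right h12 hx
    have hPlbpos : 0 < u * w b / Z := by positivity
    have hSwb : 0 ≤ S - w b := by linarith [hwleS b]
    calc pA 0 * (2 * ((S - w b) * w b) / Z * (pA 0 / P 0 b))
        ≤ (2 * u * S0 / Z) * (2 * (S * w b) / Z * ((2 * u * S0 / Z) / (u * w b / Z))) := by
          gcongr <;>
            first
              | exact hpA0le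
              | exact hPlb
              | positivity
              | linarith [hwleS b]
      _ = 8 * u * S0 ^ 2 * S / Z ^ 2 := by
          have hune : u ≠ 0 := hu.ne'
          have hwbne : w b ≠ 0 := hwb.ne'
          have hZne : Z ≠ 0 := hZpos.ne'
          field_simp
          ring
  have hbound2 : ∀ a, a ≠ 0 →
      pA a * (2 * ((S - w 0) * w 0) / Z * (pA a / P a 0)) ≤
        36 * u * w a * S0 ^ 3 / (M * Z ^ 2) := by
    intro a ha
    have hwa : 0 < w a := hw a
    have hpAann : 0 ≤ pA a := hpAnn a
    have hPa0pos : 0 < P a 0 := hPpos a 0 (Ne.symm ha)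
    have hq0 : 2 * ((S - w 0) * w 0) / Z = 2 * (S0 * u) / Z := by
      rw [← hu_def, hSeq]; ring
    have hPa0 : P a 0 = ε * (2 * u * w a / Z) := by
      rw [hP2 a ha, hQ, ← hu_def]
    have hPlb : M * w a / (2 * Z) ≤ P a 0 := by
      rw [hPa0]
      have h4 : M / (4 * u) ≤ ε := by
        rw [div_le_iff₀ (by positivity : (0:ℝ) < 4 * u)]
        nlinarith
      have hx : (0 : ℝ) ≤ 2 * u * w a / Z := by positivity
      calc M * w a / (2 * Z) = M / (4 * u) * (2 * u * w a / Z) := by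
            field_simp
            ring
        _ ≤ ε * (2 * u * w a / Z) := mul_le_mul_of_nonneg_right h4 hx
    have hPlbpos : 0 < M * w a / (2 * Z) := by positivity
    rw [hq0]
    calc pA a * (2 * (S0 * u) / Z * (pA a / P a 0))
        ≤ (3 * w a * S0 / Z) * (2 * (S0 * u) / Z *
            ((3 * w a * S0 / Z) / (M * w a / (2 * Z)))) := by
          gcongr <;>
            first
              | exact hpAale a ha
              | exact hPlb
              | positivity
      _ = 36 * u * w a * S0 ^ 3 / (M * Z ^ 2) := by
          have hune : u ≠ 0 := hu.ne'
          have hwane : w a ≠ 0 := hwa.ne'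
          have hZne : Z ≠ 0 := hZpos.ne'
          have hMne : M ≠ 0 := hMpos.ne'
          field_simp
          ring
  have hbound3 : ∀ a b, a ≠ 0 → b ≠ 0 → b ≠ a →
      pA a * (2 * ((S - w b) * w b) / Z * (pA a / P a b)) ≤
        18 * w a * S0 ^ 2 * S / Z ^ 2 := by
    intro a b ha hb0 hba
    have hwa : 0 < w a := hw a
    have hwb : 0 < w b := hw b
    have hpAann : 0 ≤ pA a := hpAnn a
    have hPabpos : 0 < P a b := hPpos a b hba
    have hPab : P a b = w a * w b / Z := by
      rw [hP3 a b ha hb0 (Ne.symm hba), hQ]; ring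
    have hPlb : w a * w b / Z ≤ P a b := hPab.ge
    have hPlbpos : 0 < w a * w b / Z := by positivity
    have hSwb : 0 ≤ S - w b := by linarith [hwleS b]
    calc pA a * (2 * ((S - w b) * w b) / Z * (pA a / P a b))
        ≤ (3 * w a * S0 / Z) * (2 * (S * w b) / Z *
            ((3 * w a * S0 / Z) / (w a * w b / Z))) := by
          gcongr <;>
            first
              | exact hpAale a ha
              | exact hPlb
              | positivity
              | linarith [hwleS b]
      _ = 18 * w a * S0 ^ 2 * S / Z ^ 2 := by
          have hwane : w a ≠ 0 := hwa.ne'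
          have hwbne : w b ≠ 0 := hwb.ne'
          have hZne : Z ≠ 0 := hZpos.ne'
          field_simp
          ring
  -- rewrite the statement's inner double sum
  have hLHS : (∑ a, pA a * ∑ b ∈ Finset.univ.erase a, ∑ a' ∈ Finset.univ.erase b,
        ∑ b' ∈ Finset.univ.erase a, Q a' b * P a b' / P a b)
      = ∑ a, ∑ b ∈ Finset.univ.erase a,
          pA a * (2 * ((S - w b) * w b) / Z * (pA a / P a b)) := by
    refine Finset.sum_congr rfl fun a _ => ?_
    rw [Finset.mul_sum]
    refine Finset.sum_congr rfl fun b hb => ?_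
    congr 1
    simp_rw [mul_div_assoc, ← Finset.mul_sum, ← Finset.sum_div, ← hpA, ← Finset.sum_mul,
      hqval b]
    ring
  rw [hLHS]
  have hK1 : (0 : ℝ) ≤ (K : ℝ) - 1 := by linarith
  have hK2 : (0 : ℝ) ≤ (K : ℝ) - 2 := by linarith
  have hcard2 : ∀ a : Fin K, a ≠ 0 → (((Finset.univ.erase a).erase 0).card : ℝ) = (K : ℝ) - 2 := by
    intro a ha
    rw [Finset.card_erase_of_mem (Finset.mem_erase.mpr ⟨Ne.symm ha, Finset.mem_univ _⟩),
      Finset.card_erase_of_mem (Finset.mem_univ _), Finset.card_univ, Fintype.card_fin,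
      Nat.cast_sub (by omega), Nat.cast_sub (by omega), Nat.cast_one]
    ring
  have hsum0 : ∑ b ∈ Finset.univ.erase (0 : Fin K),
      pA 0 * (2 * ((S - w b) * w b) / Z * (pA 0 / P 0 b))
      ≤ ((K : ℝ) - 1) * (8 * u * S0 ^ 2 * S / Z ^ 2) := by
    calc ∑ b ∈ Finset.univ.erase (0 : Fin K),
          pA 0 * (2 * ((S - w b) * w b) / Z * (pA 0 / P 0 b))
        ≤ ∑ _b ∈ Finset.univ.erase (0 : Fin K), 8 * u * S0 ^ 2 * S / Z ^ 2 :=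
          Finset.sum_le_sum hbound1
      _ = ((K : ℝ) - 1) * (8 * u * S0 ^ 2 * S / Z ^ 2) := by
          rw [Finset.sum_const, nsmul_eq_mul, Finset.card_erase_of_mem (Finset.mem_univ _),
            Finset.card_univ, Fintype.card_fin, Nat.cast_sub (by omega), Nat.cast_one]
  have hsuma : ∀ a ∈ Finset.univ.erase (0 : Fin K),
      ∑ b ∈ Finset.univ.erase a, pA a * (2 * ((S - w b) * w b) / Z * (pA a / P a b))
      ≤ w a * (36 * u * S0 ^ 3 / (M * Z ^ 2))
        + w a * (((K : ℝ) - 2) * (18 * S0 ^ 2 * S / Z ^ 2)) := by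
    intro a ha'
    have ha : a ≠ 0 := Finset.ne_of_mem_erase ha'
    have h0m : (0 : Fin K) ∈ Finset.univ.erase a :=
      Finset.mem_erase.mpr ⟨Ne.symm ha, Finset.mem_univ _⟩
    rw [← Finset.add_sum_erase _ _ h0m]
    have e1 : w a * (36 * u * S0 ^ 3 / (M * Z ^ 2)) = 36 * u * w a * S0 ^ 3 / (M * Z ^ 2) := by
      ring
    have e2 : w a * (((K : ℝ) - 2) * (18 * S0 ^ 2 * S / Z ^ 2))
        = ((K : ℝ) - 2) * (18 * w a * S0 ^ 2 * S / Z ^ 2) := by ring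
    rw [e1, e2]
    refine add_le_add (hbound2 a ha) ?_
    calc ∑ b ∈ (Finset.univ.erase a).erase 0,
          pA a * (2 * ((S - w b) * w b) / Z * (pA a / P a b))
        ≤ ∑ _b ∈ (Finset.univ.erase a).erase 0, 18 * w a * S0 ^ 2 * S / Z ^ 2 :=
          Finset.sum_le_sum fun b hb =>
            hbound3 a b ha (Finset.ne_of_mem_erase hb)
              (Finset.ne_of_mem_erase (Finset.mem_of_mem_erase hb))
      _ = ((K : ℝ) - 2) * (18 * w a * S0 ^ 2 * S / Z ^ 2) := by
          rw [Finset.sum_const, nsmul_eq_mul, hcard2 a ha]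
  -- numeric bounds
  have hZZ1 : 2 * u * S0 * (2 * u * S0) ≤ Z * Z :=
    mul_le_mul hZ1 hZ1 (by positivity) hZpos.le
  have hZZ2 : 2 * u * S0 * S0 ^ 2 ≤ Z * Z :=
    mul_le_mul hZ1 hZ2 (sq_nonneg S0) hZpos.le
  have hZZ3 : S0 ^ 2 * S0 ^ 2 ≤ Z * Z :=
    mul_le_mul hZ2 hZ2 (sq_nonneg S0) hZpos.le
  have en1 : 8 * u * S0 ^ 2 * S / Z ^ 2 ≤ 6 := by
    rw [div_le_iff₀ (by positivity : (0 : ℝ) < Z ^ 2), hSeq]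
    nlinarith [hZZ1, hZZ2]
  have en2 : 36 * u * S0 ^ 3 / (M * Z ^ 2) * S0 ≤ 18 * ((K : ℝ) - 1) := by
    rw [div_mul_eq_mul_div, div_le_iff₀ (by positivity : (0 : ℝ) < M * Z ^ 2)]
    have h := mul_le_mul hZZ2 hS0K hS0pos.le (by positivity : (0 : ℝ) ≤ Z * Z)
    nlinarith [h]
  have en3 : 18 * S0 ^ 2 * S / Z ^ 2 * S0 ≤ 27 := by
    rw [div_mul_eq_mul_div, div_le_iff₀ (by positivity : (0 : ℝ) < Z ^ 2), hSeq]
    nlinarith [hZZ2, hZZ3]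
  calc ∑ a, ∑ b ∈ Finset.univ.erase a,
        pA a * (2 * ((S - w b) * w b) / Z * (pA a / P a b))
      = (∑ b ∈ Finset.univ.erase (0 : Fin K),
          pA 0 * (2 * ((S - w b) * w b) / Z * (pA 0 / P 0 b)))
        + ∑ a ∈ Finset.univ.erase (0 : Fin K), ∑ b ∈ Finset.univ.erase a,
            pA a * (2 * ((S - w b) * w b) / Z * (pA a / P a b)) :=
        (Finset.add_sum_erase _ _ (Finset.mem_univ (0 : Fin K))).symm
    _ ≤ ((K : ℝ) - 1) * (8 * u * S0 ^ 2 * S / Z ^ 2)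
        + ∑ a ∈ Finset.univ.erase (0 : Fin K),
            (w a * (36 * u * S0 ^ 3 / (M * Z ^ 2))
              + w a * (((K : ℝ) - 2) * (18 * S0 ^ 2 * S / Z ^ 2))) :=
        add_le_add hsum0 (Finset.sum_le_sum hsuma)
    _ = ((K : ℝ) - 1) * (8 * u * S0 ^ 2 * S / Z ^ 2)
        + (S0 * (36 * u * S0 ^ 3 / (M * Z ^ 2))
            + S0 * (((K : ℝ) - 2) * (18 * S0 ^ 2 * S / Z ^ 2))) := by
        rw [Finset.sum_add_distrib, ← Finset.sum_mul, ← Finset.sum_mul, ← hS0_def]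
    _ ≤ 64 * K := by
        have b1 := mul_le_mul_of_nonneg_left en1 hK1
        have b3 := mul_le_mul_of_nonneg_left en3 hK2
        nlinarith [b1, b3, en2, hk]
end

section
/- Fix m ≤ K and a set {a_1,...,a_m} of m distinct actions in [K]. Given any (not necessarily distinct) actions A_1,...,A_m ∈ [K] with A_i ≥ m - i + 1 for all i, define recursively: Ã_k = A_k if A_k ∈ {a_1,...,a_m} and A_k ∉ {Ã_1,...,Ã_{k-1}}; otherwise Ã_k = a_j for the smallest j such that a_j ∉ {Ã_1,...,Ã_{k-1}} and a_j ≥ m - k + 1. Then for every k ≤ m: (a) Ã_k is well-defined and Ã_k ∈ {a_1,...,a_m}; (b) Ã_k ≥ m - k + 1; (c) Ã_k ∉ {Ã_1,...,Ã_{k-1}}; (d) Ã_k ∉ {A_1,...,A_{k-1}}. -/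
/-!
At step `k` at most `k` actions have been used, so at least `m - k` of the `m` distinct
positive actions `a_j` are still free, and they cannot all lie below `m - k`: the fallback
choice always exists. Every value taken is then an unused `a_j` of value at least `m - k`.
An earlier `A_i` is either outside `{a_j}`, or was taken at step `i`, or had already been
taken before step `i`; in each case it is used before step `k`, so it differs from `Ã_k`.
-/

open Finset

lemma Finset.exists_mem_le_of_card_le {T : Finset ℕ} {n : ℕ} (hT : ∀ x ∈ T, 1 ≤ x)
    (hn : 0 < n) (hcard : n ≤ #T) : ∃ x ∈ T, n ≤ x := by
  by_contra! h
  have hsub : T ⊆ Ico 1 n := fun x hx => mem_Ico.2 ⟨hT x hx, h x hx⟩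
  have := card_le_card hsub
  simp only [Nat.card_Ico] at this
  omega

section Greedy

variable {m : ℕ} (a A : Fin m → ℕ)

lemma exists_apply_notMem_of_card_lt (ha_inj : Function.Injective a) (ha_pos : ∀ j, 1 ≤ a j)
    {used : Finset ℕ} (hused : #used < m) : ∃ j, a j ∉ used ∧ m - #used ≤ a j := by
  have hcard : m - #used ≤ #(univ.image a \ used) := by
    simpa [card_image_of_injective _ ha_inj] using le_card_sdiff used (univ.image a)
  obtain ⟨x, hx, hle⟩ := Finset.exists_mem_le_of_card_le (T := univ.image a \ used)
    (by simp only [mem_sdiff, mem_image]; rintro _ ⟨⟨j, -, rfl⟩, -⟩; exact ha_pos j)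
    (by omega) hcard
  obtain ⟨⟨j, -, rfl⟩, hj⟩ := mem_sdiff.1 hx |>.imp_left mem_image.1
  exact ⟨j, hj, hle⟩

-- With zero-indexed players, `m - k ≤ a j` is the paper's `a_j ≥ m - k + 1`.
def fallbackChoices (k : Fin m) (used : Finset ℕ) : Finset (Fin m) :=
  {j | a j ∉ used ∧ m - k ≤ a j}

open Classical in
noncomputable def nextAction (k : Fin m) (used : Finset ℕ) : ℕ :=
  if A k ∈ Set.range a ∧ A k ∉ used then A k
  else if h : (fallbackChoices a k used).Nonempty then a ((fallbackChoices a k used).min' h)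
  else 0 -- unreachable, by `fallbackChoices_nonempty`

noncomputable def greedyAssignment (k : Fin m) : ℕ :=
  nextAction a A k ((Iio k).attach.image fun i => greedyAssignment i.1)
termination_by k.val
decreasing_by exact Fin.lt_def.1 (mem_Iio.1 i.2)

variable {a A}

lemma mem_fallbackChoices {k : Fin m} {used : Finset ℕ} {j : Fin m} :
    j ∈ fallbackChoices a k used ↔ a j ∉ used ∧ m - k ≤ a j := by
  simp [fallbackChoices]

lemma fallbackChoices_nonempty (ha_inj : Function.Injective a) (ha_pos : ∀ j, 1 ≤ a j)
    {k : Fin m} {used : Finset ℕ} (hused : #used ≤ k) : (fallbackChoices a k used).Nonempty := by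
  obtain ⟨j, hj, hle⟩ := exists_apply_notMem_of_card_lt a ha_inj ha_pos (hused.trans_lt k.isLt)
  exact ⟨j, mem_fallbackChoices.2 ⟨hj, by omega⟩⟩

lemma nextAction_of_fresh {k : Fin m} {used : Finset ℕ}
    (h : A k ∈ Set.range a ∧ A k ∉ used) : nextAction a A k used = A k := by
  simp only [nextAction, if_pos h]

lemma nextAction_of_not_fresh {k : Fin m} {used : Finset ℕ}
    (h : ¬(A k ∈ Set.range a ∧ A k ∉ used)) (hne : (fallbackChoices a k used).Nonempty) :
    nextAction a A k used = a ((fallbackChoices a k used).min' hne) := by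
  simp only [nextAction, if_neg h, dif_pos hne]

lemma nextAction_spec (ha_inj : Function.Injective a) (ha_pos : ∀ j, 1 ≤ a j) {k : Fin m}
    (hA : m - k ≤ A k) {used : Finset ℕ} (hused : #used ≤ k) :
    nextAction a A k used ∈ Set.range a ∧ m - k ≤ nextAction a A k used ∧
      nextAction a A k used ∉ used := by
  by_cases h : A k ∈ Set.range a ∧ A k ∉ used
  · rw [nextAction_of_fresh h]
    exact ⟨h.1, hA, h.2⟩
  · have hne := fallbackChoices_nonempty ha_inj ha_pos hused
    have hmin := mem_fallbackChoices.1 (min'_mem _ hne)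
    rw [nextAction_of_not_fresh h hne]
    exact ⟨⟨_, rfl⟩, hmin.2, hmin.1⟩

lemma greedyAssignment_eq (k : Fin m) :
    greedyAssignment a A k = nextAction a A k ((Iio k).image (greedyAssignment a A)) := by
  rw [greedyAssignment]
  congr 1
  ext x
  simp

lemma card_image_Iio_le (f : Fin m → ℕ) (k : Fin m) : #((Iio k).image f) ≤ k :=
  card_image_le.trans (Fin.card_Iio k).le

lemma greedyAssignment_spec (ha_inj : Function.Injective a) (ha_pos : ∀ j, 1 ≤ a j)
    (hA : ∀ i : Fin m, m - (i : ℕ) ≤ A i) (k : Fin m) :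
    greedyAssignment a A k ∈ Set.range a ∧ m - k ≤ greedyAssignment a A k ∧
      ∀ i < k, greedyAssignment a A i ≠ greedyAssignment a A k := by
  obtain ⟨hrange, hle, hfresh⟩ :=
    nextAction_spec ha_inj ha_pos (hA k) (card_image_Iio_le (greedyAssignment a A) k)
  rw [← greedyAssignment_eq] at hrange hle hfresh
  refine ⟨hrange, hle, fun i hi he => hfresh ?_⟩
  exact mem_image.2 ⟨i, mem_Iio.2 hi, he⟩

lemma apply_ne_greedyAssignment (ha_inj : Function.Injective a) (ha_pos : ∀ j, 1 ≤ a j)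
    (hA : ∀ i : Fin m, m - (i : ℕ) ≤ A i) {i k : Fin m} (hik : i < k) :
    A i ≠ greedyAssignment a A k := by
  obtain ⟨hrange, -, hdistinct⟩ := greedyAssignment_spec ha_inj ha_pos hA k
  by_cases h : A i ∈ Set.range a ∧ A i ∉ (Iio i).image (greedyAssignment a A)
  · rw [← nextAction_of_fresh h, ← greedyAssignment_eq]
    exact hdistinct i hik
  · intro he
    rw [not_and_not_right] at h
    obtain ⟨i', hi', hi'_eq⟩ := mem_image.1 (h (he ▸ hrange))
    exact hdistinct i' ((mem_Iio.1 hi').trans hik) (hi'_eq.trans he)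

end Greedy

theorem stmt7_general (K m : ℕ) (a : Fin m → ℕ)
    (ha_inj : Function.Injective a) (ha_mem : ∀ j, a j ∈ Finset.Icc 1 K)
    (A : Fin m → ℕ)
    (hA_lb : ∀ i : Fin m, m - (i : ℕ) ≤ A i) :
    ∃ Atil : Fin m → ℕ,
      (∀ k : Fin m,
        ((A k ∈ Set.range a ∧ ∀ i, i < k → Atil i ≠ A k) → Atil k = A k) ∧
        (¬(A k ∈ Set.range a ∧ ∀ i, i < k → Atil i ≠ A k) →
          ∃ j : Fin m, Atil k = a j ∧ (∀ i, i < k → Atil i ≠ a j) ∧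
            m - (k : ℕ) ≤ a j ∧
            ∀ j' : Fin m,
              ((∀ i, i < k → Atil i ≠ a j') ∧ m - (k : ℕ) ≤ a j') → j ≤ j')) ∧
      (∀ k, Atil k ∈ Set.range a) ∧
      (∀ k : Fin m, m - (k : ℕ) ≤ Atil k) ∧
      (∀ k i : Fin m, i < k → Atil i ≠ Atil k) ∧
      (∀ k i : Fin m, i < k → A i ≠ Atil k) := by
  have ha_pos : ∀ j, 1 ≤ a j := fun j => (mem_Icc.1 (ha_mem j)).1
  have hspec := greedyAssignment_spec ha_inj ha_pos hA_lb
  refine ⟨greedyAssignment a A, fun k => ?_, fun k => (hspec k).1, fun k => (hspec k).2.1,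
    fun k i hik => (hspec k).2.2 i hik,
    fun k i hik => apply_ne_greedyAssignment ha_inj ha_pos hA_lb hik⟩
  have hunused : ∀ x, x ∉ (Iio k).image (greedyAssignment a A) ↔
      ∀ i, i < k → greedyAssignment a A i ≠ x := by simp
  simp only [← hunused, greedyAssignment_eq k]
  refine ⟨nextAction_of_fresh, fun h => ?_⟩
  have hne := fallbackChoices_nonempty ha_inj ha_pos (card_image_Iio_le (greedyAssignment a A) k)
  have hmin := mem_fallbackChoices.1 (min'_mem _ hne)
  exact ⟨_, nextAction_of_not_fresh h hne, hmin.1, hmin.2,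
    fun j' hj' => min'_le _ _ (mem_fallbackChoices.2 hj')⟩

/-- The recursive assignment `Atil` of a distinct top-`m` action to each player is
well defined and satisfies properties (a)–(d): there exists `Atil` following the
recursion (take `A_k` when possible, otherwise the available `a_j` of smallest
index `j` with `a_j ≥ m - k + 1`), and for every `k`: `Atil k ∈ {a_1,…,a_m}`,
`Atil k ≥ m - k + 1` (zero-indexed: `m - k`), `Atil k` differs from all previous
`Atil i`, and `Atil k` differs from all previous `A i`. Actions are labeled
`1,…,K` as natural numbers. -/
theorem stmt7 (K m : ℕ) (hm : m ≤ K) (a : Fin m → ℕ)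
    (ha_inj : Function.Injective a) (ha_mem : ∀ j, a j ∈ Finset.Icc 1 K)
    (A : Fin m → ℕ) (hA_mem : ∀ i, A i ∈ Finset.Icc 1 K)
    (hA_lb : ∀ i : Fin m, m - (i : ℕ) ≤ A i) :
    ∃ Atil : Fin m → ℕ,
      (∀ k : Fin m,
        ((A k ∈ Set.range a ∧ ∀ i, i < k → Atil i ≠ A k) → Atil k = A k) ∧
        (¬(A k ∈ Set.range a ∧ ∀ i, i < k → Atil i ≠ A k) →
          ∃ j : Fin m, Atil k = a j ∧ (∀ i, i < k → Atil i ≠ a j) ∧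
            m - (k : ℕ) ≤ a j ∧
            ∀ j' : Fin m,
              ((∀ i, i < k → Atil i ≠ a j') ∧ m - (k : ℕ) ≤ a j') → j ≤ j')) ∧
      (∀ k, Atil k ∈ Set.range a) ∧
      (∀ k : Fin m, m - (k : ℕ) ≤ Atil k) ∧
      (∀ k i : Fin m, i < k → Atil i ≠ Atil k) ∧
      (∀ k i : Fin m, i < k → A i ≠ Atil k) :=
  stmt7_general K m a ha_inj ha_mem A hA_lb
end

section
/- In the setting of the recursive assignment Ã (with m distinct actions a_1,...,a_m in [K], m ≤ K, and A_i ≥ m-i+1 for all i ≤ m), the multiset {Ã_1, ..., Ã_m} equals the set {a_1, ..., a_m}; i.e., Ã is a bijection from {1,...,m} onto {a_1,...,a_m}. -/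
/-- Any assignment `Atil` satisfying the recursive specification (take `A_k` when
possible, otherwise the available `a_j` of smallest index with
`a_j ≥ m - k + 1`) is a bijection from the players `{1,…,m}` onto the action set
`{a_1,…,a_m}`: it is injective and its range equals the range of `a`. -/
theorem stmt8 (K m : ℕ) (hm : m ≤ K) (a : Fin m → ℕ)
    (ha_inj : Function.Injective a) (ha_mem : ∀ j, a j ∈ Finset.Icc 1 K)
    (A : Fin m → ℕ) (hA_mem : ∀ i, A i ∈ Finset.Icc 1 K)
    (hA_lb : ∀ i : Fin m, m - (i : ℕ) ≤ A i)
    (Atil : Fin m → ℕ)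
    (hspec : ∀ k : Fin m,
      ((A k ∈ Set.range a ∧ ∀ i, i < k → Atil i ≠ A k) → Atil k = A k) ∧
      (¬(A k ∈ Set.range a ∧ ∀ i, i < k → Atil i ≠ A k) →
        ∃ j : Fin m, Atil k = a j ∧ (∀ i, i < k → Atil i ≠ a j) ∧
          m - (k : ℕ) ≤ a j ∧
          ∀ j' : Fin m,
            ((∀ i, i < k → Atil i ≠ a j') ∧ m - (k : ℕ) ≤ a j') → j ≤ j')) :
    Function.Injective Atil ∧ Set.range Atil = Set.range a := by
  have key : ∀ k : Fin m, Atil k ∈ Set.range a ∧ ∀ i, i < k → Atil i ≠ Atil k := by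
    intro k
    rcases hspec k with ⟨h1, h2⟩
    by_cases hc : A k ∈ Set.range a ∧ ∀ i, i < k → Atil i ≠ A k
    · have hk := h1 hc
      rw [hk]; exact ⟨hc.1, hc.2⟩
    · obtain ⟨j, hj1, hj2, _, _⟩ := h2 hc
      rw [hj1]; exact ⟨⟨j, rfl⟩, hj2⟩
  have hinj : Function.Injective Atil := by
    intro i k h
    rcases lt_trichotomy i k with hlt | heq | hgt
    · exact absurd h ((key k).2 i hlt)
    · exact heq
    · exact absurd h.symm ((key i).2 k hgt)
  refine ⟨hinj, ?_⟩
  have hsub : Finset.image Atil Finset.univ ⊆ Finset.image a Finset.univ := by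
    intro x hx
    simp only [Finset.mem_image, Finset.mem_univ, true_and] at hx ⊢
    obtain ⟨k, hk⟩ := hx
    obtain ⟨j, hj⟩ := (key k).1
    exact ⟨j, hj.trans hk⟩
  have hcard : (Finset.image a Finset.univ).card ≤ (Finset.image Atil Finset.univ).card := by
    rw [Finset.card_image_of_injective _ hinj, Finset.card_image_of_injective _ ha_inj]
  have heq := Finset.eq_of_subset_of_card_le hsub hcard
  ext x
  simp only [Set.mem_range]
  constructor
  · rintro ⟨k, rfl⟩
    have := hsub (Finset.mem_image_of_mem _ (Finset.mem_univ k))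
    simpa using this
  · rintro ⟨j, rfl⟩
    have : a j ∈ Finset.image Atil Finset.univ :=
      heq ▸ Finset.mem_image_of_mem _ (Finset.mem_univ j)
    simpa using this
end

section
/- Let η > 0 and w : [K] → ℝ_{>0}, and let P be an ordered-pair distribution on distinct arms with P((a,b)) = c_{a,b}·w(a)w(b)/Z' for constants c_{a,b} ∈ {ε, 1-ε, 1/2} (with ε ∈ (0,1/2]) and Z' a normalizer. Suppose each w is updated to w'(a) = w(a)·exp(-η δ(a)) with 0 ≤ δ(a) ≤ 1/Ξ(a), the normalizer does not increase (Z'' ≤ Z'), and the conditional distributions satisfy ∑_{b≠a} p^B(b|a)(1 - η/Ξ(b)) ≥ 1 - ηL where L := max_{a≠b} p^B(b|a)/Ξ(b). Then the updated marginal satisfies p'^A(a) ≥ (1 - ηL)·e^{-η/Ξ(a)}·p^A(a) ≥ (1 - ηL - η/Ξ(a))·p^A(a) for every a. -/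
/-- Multiplicative stability of the first marginal under an exponential-weight
update: if each weight decreases by a factor in `[e^{-η/Ξ(a)}, 1]`, the
normalizer does not increase, and
`∑_{b≠a} p^B(b|a)(1 - η/Ξ(b)) ≥ 1 - ηL`, then
`p'^A(a) ≥ (1 - ηL)·e^{-η/Ξ(a)}·p^A(a) ≥ (1 - ηL - η/Ξ(a))·p^A(a)`. -/
theorem stmt12 {K : ℕ} (η ε : ℝ) (hη : 0 < η) (hε : 0 < ε) (hε2 : ε ≤ 1 / 2)
    (w w' Ξ δ : Fin K → ℝ) (hw : ∀ a, 0 < w a) (hΞ : ∀ a, 0 < Ξ a)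
    (hδ : ∀ a, 0 ≤ δ a ∧ δ a ≤ 1 / Ξ a)
    (hw' : ∀ a, w' a = w a * Real.exp (-η * δ a))
    (c : Fin K → Fin K → ℝ)
    (hc : ∀ a b, c a b = ε ∨ c a b = 1 - ε ∨ c a b = 1 / 2)
    (Z' Z'' : ℝ) (hZ'pos : 0 < Z') (hZ''pos : 0 < Z'') (hZle : Z'' ≤ Z')
    (P P' : Fin K → Fin K → ℝ)
    (hP : ∀ a b, P a b = c a b * w a * w b / Z')
    (hP' : ∀ a b, P' a b = c a b * w' a * w' b / Z'')
    (pA p'A : Fin K → ℝ)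
    (hpA : ∀ a, pA a = ∑ b ∈ Finset.univ.erase a, P a b)
    (hp'A : ∀ a, p'A a = ∑ b ∈ Finset.univ.erase a, P' a b)
    (pB : Fin K → Fin K → ℝ)
    (hpB : ∀ a b, pB b a = P a b / pA a)
    (L : ℝ)
    (hL : ∀ a, (1 : ℝ) - η * L ≤ ∑ b ∈ Finset.univ.erase a, pB b a * (1 - η / Ξ b)) :
    ∀ a, (1 - η * L) * Real.exp (-(η / Ξ a)) * pA a ≤ p'A a ∧
      (1 - η * L - η / Ξ a) * pA a ≤ p'A a := by
  intro a
  have hcpos : ∀ x y, 0 < c x y := by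
    intro x y; rcases hc x y with h | h | h <;> rw [h] <;> linarith
  have hPpos : ∀ x y, 0 < P x y := by
    intro x y
    rw [hP]
    have := hcpos x y
    have := hw x
    have := hw y
    positivity
  have hspos : 0 < η / Ξ a := div_pos hη (hΞ a)
  have hexp1 : Real.exp (-(η / Ξ a)) ≤ 1 := Real.exp_le_one_iff.mpr (by linarith)
  have hexp2 : 1 - η / Ξ a ≤ Real.exp (-(η / Ξ a)) := by
    have := Real.add_one_le_exp (-(η / Ξ a)); linarith
  have key : ∀ b ∈ Finset.univ.erase a,
      Real.exp (-(η / Ξ a)) * (P a b * (1 - η / Ξ b)) ≤ P' a b := by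
    intro b _
    have hP'eq : P' a b
        = P a b * (Z' / Z'') * (Real.exp (-η * δ a) * Real.exp (-η * δ b)) := by
      rw [hP', hP, hw' a, hw' b]
      field_simp
    have hx : Real.exp (-(η / Ξ a)) ≤ Real.exp (-η * δ a) := by
      apply Real.exp_le_exp.mpr
      have h1 := (hδ a).2
      have : η * δ a ≤ η * (1 / Ξ a) := by
        apply mul_le_mul_of_nonneg_left h1 hη.le
      have h2 : η * (1 / Ξ a) = η / Ξ a := by ring
      linarith [h2 ▸ this]
    have hy : 1 - η / Ξ b ≤ Real.exp (-η * δ b) := by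
      have h1 := Real.add_one_le_exp (-η * δ b)
      have h2 := (hδ b).2
      have : η * δ b ≤ η * (1 / Ξ b) := mul_le_mul_of_nonneg_left h2 hη.le
      have h3 : η * (1 / Ξ b) = η / Ξ b := by ring
      nlinarith
    have hq : 1 ≤ Z' / Z'' := (one_le_div hZ''pos).mpr hZle
    have hp := hPpos a b
    have hxpos : 0 < Real.exp (-η * δ a) := Real.exp_pos _
    have hypos : 0 < Real.exp (-η * δ b) := Real.exp_pos _
    have hepos : 0 < Real.exp (-(η / Ξ a)) := Real.exp_pos _
    rw [hP'eq]
    rcases le_or_gt (1 - η / Ξ b) 0 with hu | hu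
    · have : Real.exp (-(η / Ξ a)) * (P a b * (1 - η / Ξ b)) ≤ 0 := by
        apply mul_nonpos_of_nonneg_of_nonpos hepos.le
        exact mul_nonpos_of_nonneg_of_nonpos hp.le hu
      nlinarith [mul_pos (mul_pos hp (div_pos hZ'pos hZ''pos)) (mul_pos hxpos hypos)]
    · have step1 : Real.exp (-(η / Ξ a)) * (P a b * (1 - η / Ξ b))
          ≤ Real.exp (-η * δ a) * (P a b * Real.exp (-η * δ b)) := by
        apply mul_le_mul hx _ (by positivity) hxpos.le
        exact mul_le_mul_of_nonneg_left hy hp.le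
      have step2 : Real.exp (-η * δ a) * (P a b * Real.exp (-η * δ b))
          ≤ P a b * (Z' / Z'') * (Real.exp (-η * δ a) * Real.exp (-η * δ b)) := by
        nlinarith [mul_pos hp (mul_pos hxpos hypos)]
      linarith
  have hsum : Real.exp (-(η / Ξ a)) * ∑ b ∈ Finset.univ.erase a, P a b * (1 - η / Ξ b)
      ≤ p'A a := by
    rw [hp'A, Finset.mul_sum]
    exact Finset.sum_le_sum key
  rcases Finset.eq_empty_or_nonempty (Finset.univ.erase a) with he | hne
  · have h0 : pA a = 0 := by rw [hpA, he, Finset.sum_empty]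
    have h0' : p'A a = 0 := by rw [hp'A, he, Finset.sum_empty]
    rw [h0, h0']
    constructor <;> simp
  · have hpAa : 0 < pA a := by
      rw [hpA]
      exact Finset.sum_pos (fun b _ => hPpos a b) hne
    have hBsum : ∑ b ∈ Finset.univ.erase a, pB b a * (1 - η / Ξ b)
        = (∑ b ∈ Finset.univ.erase a, P a b * (1 - η / Ξ b)) / pA a := by
      rw [Finset.sum_div]
      apply Finset.sum_congr rfl
      intro b _
      rw [hpB]
      ring
    have hKey : pA a * (1 - η * L) ≤ ∑ b ∈ Finset.univ.erase a, P a b * (1 - η / Ξ b) := by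
      have h := hL a
      rw [hBsum, le_div_iff₀ hpAa] at h
      rw [mul_comm]
      exact h
    have first : (1 - η * L) * Real.exp (-(η / Ξ a)) * pA a ≤ p'A a := by
      have h1 : Real.exp (-(η / Ξ a)) * (pA a * (1 - η * L))
          ≤ Real.exp (-(η / Ξ a)) * ∑ b ∈ Finset.univ.erase a, P a b * (1 - η / Ξ b) :=
        mul_le_mul_of_nonneg_left hKey (Real.exp_pos _).le
      calc (1 - η * L) * Real.exp (-(η / Ξ a)) * pA a
          = Real.exp (-(η / Ξ a)) * (pA a * (1 - η * L)) := by ring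
        _ ≤ _ := le_trans h1 hsum
    refine ⟨first, ?_⟩
    -- show 1 - η * L ≤ 1
    have ht1 : 1 - η * L ≤ 1 := by
      have h2 : ∑ b ∈ Finset.univ.erase a, pB b a * (1 - η / Ξ b)
          ≤ ∑ b ∈ Finset.univ.erase a, pB b a := by
        apply Finset.sum_le_sum
        intro b _
        have hpBpos : 0 < pB b a := by
          rw [hpB]; exact div_pos (hPpos a b) hpAa
        nlinarith [div_pos hη (hΞ b)]
      have h3 : ∑ b ∈ Finset.univ.erase a, pB b a = 1 := by
        have : ∑ b ∈ Finset.univ.erase a, pB b a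
            = (∑ b ∈ Finset.univ.erase a, P a b) / pA a := by
          rw [Finset.sum_div]
          exact Finset.sum_congr rfl fun b _ => hpB a b
        rw [this, ← hpA, div_self hpAa.ne']
      have := hL a
      linarith
    have hsecond : (1 - η * L - η / Ξ a) * pA a
        ≤ (1 - η * L) * Real.exp (-(η / Ξ a)) * pA a := by
      apply mul_le_mul_of_nonneg_right _ hpAa.le
      nlinarith [mul_nonneg (sub_nonneg.mpr ht1) (sub_nonneg.mpr hexp1)]
    linarith
end

section
/- Let w : [K] → ℝ_{>0} with arms ordered so w(1) = max_i w(i) at a reference time τ, let w_τ denote the reference weights and w_t current weights satisfying w_t(1) ≥ (1/2)w_τ(1) and w_t(2) ≥ (1/2)w_τ(2) and w_t(b) ≤ w_τ(b) for all b, where w_τ(2) = max_{i≠1} w_τ(i). With ε = w_τ(2)/(2w_τ(1)) and the assignment P (P((1,i)) = (1-ε)Q, P((i,1)) = εQ, P((i,j)) = Q/2 otherwise), for all a ≠ 1: p^B(1|a) ≥ 1/(4K), and for all a and b ∉ {1,a}: w_t(b)/(K·w_τ(2)) ≤ p^B(b|a) ≤ 4·w_t(b)/w_τ(2). -/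
set_option maxHeartbeats 1000000 in
/-- Bounds on the conditional probabilities `p^B(b|a)` for the biased assignment
with dominating arm `0` (paper's arm 1) and second arm `1` (paper's arm 2):
`p^B(0|a) ≥ 1/(4K)` for `a ≠ 0`, and
`w_t(b)/(K·w_τ(1)) ≤ p^B(b|a) ≤ 4·w_t(b)/w_τ(1)` for `b ∉ {0, a}`. -/
theorem stmt14 {K : ℕ} [NeZero K] (hK : 3 ≤ K) (wτ wt : Fin K → ℝ)
    (hwτ : ∀ i, 0 < wτ i) (hwt : ∀ i, 0 < wt i)
    (hmax1 : ∀ i, wτ i ≤ wτ 0)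
    (hmax2 : ∀ i, i ≠ 0 → wτ i ≤ wτ 1)
    (hle : ∀ b, wt b ≤ wτ b)
    (h1 : wτ 0 / 2 ≤ wt 0) (h2 : wτ 1 / 2 ≤ wt 1)
    (ε : ℝ) (hε : ε = wτ 1 / (2 * wτ 0))
    (Z : ℝ) (hZ : Z = ∑ a, ∑ b ∈ Finset.univ.erase a, wt a * wt b)
    (Q : Fin K → Fin K → ℝ) (hQ : ∀ a b, Q a b = 2 * wt a * wt b / Z)
    (P : Fin K → Fin K → ℝ)
    (hP1 : ∀ i, i ≠ 0 → P 0 i = (1 - ε) * Q 0 i)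
    (hP2 : ∀ i, i ≠ 0 → P i 0 = ε * Q 0 i)
    (hP3 : ∀ i j, i ≠ 0 → j ≠ 0 → i ≠ j → P i j = (1 / 2) * Q i j)
    (pB : Fin K → Fin K → ℝ)
    (hpB : ∀ a b, b ≠ a → pB b a = P a b / ∑ b' ∈ Finset.univ.erase a, P a b') :
    (∀ a, a ≠ 0 → 1 / (4 * K) ≤ pB 0 a) ∧
    (∀ a b, b ≠ 0 → b ≠ a →
      wt b / (K * wτ 1) ≤ pB b a ∧ pB b a ≤ 4 * wt b / wτ 1) := by
  have hτ0 := hwτ 0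
  have hτ1 := hwτ 1
  have hτ10 : wτ 1 ≤ wτ 0 := hmax1 1
  have hKR : (3:ℝ) ≤ (K:ℝ) := by exact_mod_cast hK
  have h01 : (1 : Fin K) ≠ 0 := by
    intro h
    have h1K : (1:ℕ) < K := by omega
    have := congrArg Fin.val h
    rw [Fin.val_one', Nat.mod_eq_of_lt h1K] at this
    simp at this
  have hZpos : 0 < Z := by
    rw [hZ]
    apply Finset.sum_pos
    · intro a _
      apply Finset.sum_pos
      · intro b _; exact mul_pos (hwt a) (hwt b)
      · rw [← Finset.card_pos, Finset.card_erase_of_mem (Finset.mem_univ a),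
          Finset.card_univ, Fintype.card_fin]
        omega
    · exact Finset.univ_nonempty
  have hεpos : 0 < ε := by rw [hε]; positivity
  have hεhalf : ε ≤ 1/2 := by
    rw [hε, div_le_div_iff₀ (by linarith) (by norm_num)]
    linarith
  have h1ε : (0:ℝ) < 1 - ε := by linarith
  have Tub : ∀ s : Finset (Fin K), (0:Fin K) ∉ s → ∑ b ∈ s, wt b ≤ s.card * wτ 1 := by
    intro s hs
    calc ∑ b ∈ s, wt b ≤ ∑ _b ∈ s, wτ 1 :=
        Finset.sum_le_sum fun b hb => (hle b).trans (hmax2 b (fun h => hs (h ▸ hb)))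
      _ = s.card * wτ 1 := by rw [Finset.sum_const, nsmul_eq_mul]
  have bnd : ∀ D b, wτ 1 / 2 ≤ D → D ≤ K * wτ 1 →
      wt b / (K * wτ 1) ≤ wt b / D ∧ wt b / D ≤ 4 * wt b / wτ 1 := by
    intro D b hD1 hD2
    have hDpos : 0 < D := by linarith
    have hb := hwt b
    constructor
    · gcongr
    · rw [div_le_div_iff₀ hDpos hτ1]
      nlinarith
  -- Case a ≠ 0
  have main : ∀ a : Fin K, a ≠ 0 →
      (1/(4*K) ≤ pB 0 a) ∧ ∀ b, b ≠ 0 → b ≠ a →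
        wt b / (K * wτ 1) ≤ pB b a ∧ pB b a ≤ 4 * wt b / wτ 1 := by
    intro a ha
    set T := ∑ b' ∈ (Finset.univ.erase a).erase 0, wt b' with hT
    have h0mem : (0:Fin K) ∈ Finset.univ.erase a :=
      Finset.mem_erase.2 ⟨Ne.symm ha, Finset.mem_univ 0⟩
    have hSa : ∑ b' ∈ Finset.univ.erase a, P a b' = wt a / Z * (2*ε*wt 0 + T) := by
      rw [← Finset.add_sum_erase _ _ h0mem]
      have e1 : P a 0 = wt a / Z * (2*ε*wt 0) := by
        rw [hP2 a ha, hQ]; ring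
      have e2 : ∀ b' ∈ (Finset.univ.erase a).erase 0, P a b' = wt a / Z * wt b' := by
        intro b' hb'
        have hb'0 : b' ≠ 0 := (Finset.mem_erase.1 hb').1
        have hb'a : b' ≠ a := (Finset.mem_erase.1 (Finset.mem_erase.1 hb').2).1
        rw [hP3 a b' ha hb'0 (Ne.symm hb'a), hQ]; ring
      rw [e1, Finset.sum_congr rfl e2, ← Finset.mul_sum]
      ring
    have hTcard : ((Finset.univ.erase a).erase 0).card = K - 2 := by
      rw [Finset.card_erase_of_mem h0mem, Finset.card_erase_of_mem (Finset.mem_univ a),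
        Finset.card_univ, Fintype.card_fin]
      omega
    have hT0 : 0 ≤ T := Finset.sum_nonneg fun b _ => (hwt b).le
    have hTub : T ≤ ((K:ℝ) - 1) * wτ 1 := by
      have h := Tub _ (Finset.notMem_erase 0 (Finset.univ.erase a))
      rw [hTcard] at h
      have hc : ((K - 2 : ℕ):ℝ) ≤ (K:ℝ) - 1 := by
        have h' : (K - 2 : ℕ) + 1 ≤ K := by omega
        have h'' := (Nat.cast_le (α := ℝ)).2 h'
        push_cast at h''
        linarith
      nlinarith
    have hNeq : 2*ε*wt 0 = wτ 1 * wt 0 / wτ 0 := by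
      rw [hε]; field_simp
    have hN1 : wτ 1 / 2 ≤ 2*ε*wt 0 := by
      rw [hNeq, le_div_iff₀ hτ0]; nlinarith
    have hN2 : 2*ε*wt 0 ≤ wτ 1 := by
      rw [hNeq, div_le_iff₀ hτ0]; nlinarith [hle 0]
    have hD1 : wτ 1 / 2 ≤ 2*ε*wt 0 + T := by linarith
    have hD2 : 2*ε*wt 0 + T ≤ K * wτ 1 := by nlinarith
    have hDpos : 0 < 2*ε*wt 0 + T := by linarith
    have hcne : wt a / Z ≠ 0 := div_ne_zero (hwt a).ne' hZpos.ne'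
    constructor
    · rw [hpB a 0 (Ne.symm ha), hSa, hP2 a ha, hQ]
      have e : ε * (2 * wt 0 * wt a / Z) = wt a / Z * (2*ε*wt 0) := by ring
      rw [e, mul_div_mul_left _ _ hcne, div_le_div_iff₀ (by positivity) hDpos]
      nlinarith [mul_le_mul_of_nonneg_left hN1 (show (0:ℝ) ≤ 4*K by positivity)]
    · intro b hb0 hba
      rw [hpB a b hba, hSa, hP3 a b ha hb0 (Ne.symm hba), hQ]
      have e : (1:ℝ)/2 * (2 * wt a * wt b / Z) = wt a / Z * wt b := by ring
      rw [e, mul_div_mul_left _ _ hcne]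
      exact bnd _ b hD1 hD2
  refine ⟨fun a ha => (main a ha).1, fun a b hb0 hba => ?_⟩
  rcases eq_or_ne a 0 with rfl | ha
  · -- a = 0
    set W := ∑ b' ∈ Finset.univ.erase (0:Fin K), wt b' with hW
    have h1mem : (1:Fin K) ∈ Finset.univ.erase (0:Fin K) :=
      Finset.mem_erase.2 ⟨h01, Finset.mem_univ 1⟩
    have hS0 : ∑ b' ∈ Finset.univ.erase (0:Fin K), P 0 b' = (1-ε) * 2 * wt 0 / Z * W := by
      have e2 : ∀ b' ∈ Finset.univ.erase (0:Fin K),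
          P 0 b' = (1-ε) * 2 * wt 0 / Z * wt b' := by
        intro b' hb'
        rw [hP1 b' (Finset.mem_erase.1 hb').1, hQ]; ring
      rw [Finset.sum_congr rfl e2, ← Finset.mul_sum]
    have hWcard : (Finset.univ.erase (0:Fin K)).card = K - 1 := by
      rw [Finset.card_erase_of_mem (Finset.mem_univ 0), Finset.card_univ, Fintype.card_fin]
    have hW1 : wτ 1 / 2 ≤ W :=
      h2.trans (Finset.single_le_sum (fun i _ => (hwt i).le) h1mem)
    have hW2 : W ≤ K * wτ 1 := by
      have h := Tub _ (Finset.notMem_erase 0 Finset.univ)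
      rw [hWcard] at h
      have hc : ((K - 1 : ℕ):ℝ) ≤ (K:ℝ) := by
        have h' : (K - 1 : ℕ) ≤ K := by omega
        exact_mod_cast h'
      nlinarith
    have hcne : (1-ε) * 2 * wt 0 / Z ≠ 0 :=
      div_ne_zero (by nlinarith [hwt 0]) hZpos.ne'
    rw [hpB 0 b hb0, hS0, hP1 b hb0, hQ]
    have e : (1-ε) * (2 * wt 0 * wt b / Z) = (1-ε) * 2 * wt 0 / Z * wt b := by ring
    rw [e, mul_div_mul_left _ _ hcne]
    exact bnd _ b hW1 hW2
  · exact (main a ha).2 b hb0 hba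
end

section
/- In the setting of the previous lemma, define Ξ_t(i) = w_t(i)/(2K·w_τ(2)) for i ≠ 1 and Ξ_t(1) = 1/(8K). Then for every arm a, Ξ_t(a) ≥ p^A_t(a)/(4K²), where p^A_t(a) = ∑_{b≠a} P_t((a,b)). -/
/-- With `Ξ_t(i) = w_t(i)/(2K·w_τ(1))` for `i ≠ 0` and `Ξ_t(0) = 1/(8K)`
(arm `0` is the paper's arm 1, arm `1` the paper's arm 2), every arm `a`
satisfies `Ξ_t(a) ≥ p^A_t(a)/(4K²)`. -/
theorem stmt15 {K : ℕ} [NeZero K] (hK : 3 ≤ K) (wτ wt : Fin K → ℝ)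
    (hwτ : ∀ i, 0 < wτ i) (hwt : ∀ i, 0 < wt i)
    (hmax1 : ∀ i, wτ i ≤ wτ 0)
    (hmax2 : ∀ i, i ≠ 0 → wτ i ≤ wτ 1)
    (hle : ∀ b, wt b ≤ wτ b)
    (h1 : wτ 0 / 2 ≤ wt 0) (h2 : wτ 1 / 2 ≤ wt 1)
    (ε : ℝ) (hε : ε = wτ 1 / (2 * wτ 0))
    (Z : ℝ) (hZ : Z = ∑ a, ∑ b ∈ Finset.univ.erase a, wt a * wt b)
    (Q : Fin K → Fin K → ℝ) (hQ : ∀ a b, Q a b = 2 * wt a * wt b / Z)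
    (P : Fin K → Fin K → ℝ)
    (hP1 : ∀ i, i ≠ 0 → P 0 i = (1 - ε) * Q 0 i)
    (hP2 : ∀ i, i ≠ 0 → P i 0 = ε * Q 0 i)
    (hP3 : ∀ i j, i ≠ 0 → j ≠ 0 → i ≠ j → P i j = (1 / 2) * Q i j)
    (pA : Fin K → ℝ) (hpA : ∀ a, pA a = ∑ b ∈ Finset.univ.erase a, P a b)
    (Ξ : Fin K → ℝ)
    (hΞ0 : Ξ 0 = 1 / (8 * K))
    (hΞ : ∀ i, i ≠ 0 → Ξ i = wt i / (2 * K * wτ 1)) :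
    ∀ a, pA a / (4 * K ^ 2) ≤ Ξ a := by
  have hK3 : (3:ℝ) ≤ (K:ℝ) := by exact_mod_cast hK
  have hKpos : (0:ℝ) < K := by linarith
  have h10 : (1 : Fin K) ≠ 0 := by
    intro h
    have := congrArg Fin.val h
    rw [Fin.val_one'] at this
    rw [Nat.mod_eq_of_lt (by omega : 1 < K)] at this
    simp at this
  have hεnn : 0 ≤ ε := by
    rw [hε]
    exact div_nonneg (hwτ 1).le (by linarith [hwτ 0])
  have hεle : ε ≤ 1/2 := by
    rw [hε, div_le_div_iff₀ (by linarith [hwτ 0]) two_pos]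
    nlinarith [hmax1 1, hwτ 0]
  obtain ⟨S0, hS0⟩ : ∃ x : ℝ, x = ∑ b ∈ Finset.univ.erase 0, wt b := ⟨_, rfl⟩
  have hS0pos : 0 < S0 := by
    rw [hS0]
    exact Finset.sum_pos (fun i _ => hwt i) ⟨1, by simp [Finset.mem_erase, h10]⟩
  have hZge : 2 * wt 0 * S0 ≤ Z := by
    rw [hZ, ← Finset.add_sum_erase _ _ (Finset.mem_univ 0)]
    have e1 : ∑ b ∈ Finset.univ.erase 0, wt 0 * wt b = wt 0 * S0 := by
      rw [hS0, Finset.mul_sum]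
    have e2 : ∀ a ∈ Finset.univ.erase 0,
        wt a * wt 0 ≤ ∑ b ∈ Finset.univ.erase a, wt a * wt b := by
      intro a ha
      refine Finset.single_le_sum (f := fun b => wt a * wt b)
        (fun b _ => mul_nonneg (hwt a).le (hwt b).le) ?_
      simp [Finset.mem_erase, Ne.symm (Finset.mem_erase.mp ha).1]
    calc 2 * wt 0 * S0 = wt 0 * S0 + S0 * wt 0 := by ring
    _ ≤ _ := by
      refine add_le_add (le_of_eq e1.symm) ?_
      rw [hS0, Finset.sum_mul]
      exact Finset.sum_le_sum e2
  have hwt1leS0 : wt 1 ≤ S0 := by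
    rw [hS0]
    exact Finset.single_le_sum (f := wt) (fun i _ => (hwt i).le)
      (by simp [Finset.mem_erase, h10])
  have hZ2 : 2 * wt 0 * wt 1 ≤ Z := by
    refine le_trans ?_ hZge
    have := hwt 0
    nlinarith
  have hZpos : 0 < Z := lt_of_lt_of_le (by nlinarith [hwt 0, hwt 1]) hZ2
  have hZwτ : wτ 1 ^ 2 / 2 ≤ Z := by
    have hm := mul_le_mul h1 h2 (by linarith [hwτ 1]) (hwt 0).le
    nlinarith [hmax1 1, hwτ 1]
  intro a
  by_cases ha : a = 0
  · subst ha
    have hpA0 : pA 0 = (1 - ε) * (2 * wt 0 * S0) / Z := by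
      rw [hpA]
      rw [Finset.sum_congr rfl
        (fun b hb => by rw [hP1 b (Finset.mem_erase.mp hb).1, hQ])]
      rw [hS0, Finset.mul_sum, Finset.mul_sum, Finset.sum_div]
      exact Finset.sum_congr rfl (fun b _ => by ring)
    have hpA0le1 : pA 0 ≤ 1 := by
      rw [hpA0, div_le_one hZpos]
      nlinarith [mul_nonneg hεnn (by nlinarith [hwt 0, hS0pos] : (0:ℝ) ≤ 2 * wt 0 * S0)]
    have hpA0nn : 0 ≤ pA 0 := by
      rw [hpA0]
      exact div_nonneg (by nlinarith [mul_pos (hwt 0) hS0pos]) hZpos.le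
    have h4K : (0:ℝ) < 4 * (K:ℝ)^2 := by nlinarith
    have h8K : (0:ℝ) < 8 * (K:ℝ) := by linarith
    rw [hΞ0, div_le_div_iff₀ h4K h8K]
    calc pA 0 * (8 * (K:ℝ)) ≤ 1 * (8 * (K:ℝ)) :=
          mul_le_mul_of_nonneg_right hpA0le1 h8K.le
    _ ≤ 1 * (4 * (K:ℝ)^2) := by
          linarith only [hK3,
            mul_nonneg (by linarith only [hK3] : (0:ℝ) ≤ 4 * (K:ℝ))
              (by linarith only [hK3] : (0:ℝ) ≤ (K:ℝ) - 2)]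
  · have h0mem : (0:Fin K) ∈ Finset.univ.erase a := by
      simp [Finset.mem_erase, Ne.symm ha]
    obtain ⟨T, hT⟩ : ∃ T : Finset (Fin K), T = (Finset.univ.erase a).erase 0 :=
      ⟨_, rfl⟩
    obtain ⟨ST, hSTdef⟩ : ∃ x : ℝ, x = ∑ b ∈ T, wt b := ⟨_, rfl⟩
    have hpAa : pA a = (2 * ε * wt 0 * wt a + wt a * ST) / Z := by
      rw [hpA, ← Finset.add_sum_erase _ _ h0mem, hP2 a ha, hQ, ← hT]
      have hthis : ∑ b ∈ T, P a b = ∑ b ∈ T, wt a * wt b / Z := by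
        refine Finset.sum_congr rfl (fun b hb => ?_)
        rw [hT] at hb
        have hb0 : b ≠ 0 := (Finset.mem_erase.mp hb).1
        have hba : b ≠ a := (Finset.mem_erase.mp (Finset.mem_erase.mp hb).2).1
        rw [hP3 a b ha hb0 (Ne.symm hba), hQ]
        ring
      have hsum : ∑ b ∈ T, wt a * wt b / Z = wt a * ST / Z := by
        rw [hSTdef, Finset.mul_sum, Finset.sum_div]
      rw [hthis, hsum]
      ring
    have hcard : T.card = K - 2 := by
      rw [hT, Finset.card_erase_of_mem h0mem,
        Finset.card_erase_of_mem (Finset.mem_univ a), Finset.card_univ,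
        Fintype.card_fin]
      omega
    have hST : ST ≤ ((K:ℝ) - 2) * wτ 1 := by
      calc ST ≤ ∑ _b ∈ T, wτ 1 := by
            rw [hSTdef]
            refine Finset.sum_le_sum (fun b hb => ?_)
            rw [hT] at hb
            exact (hle b).trans (hmax2 b (Finset.mem_erase.mp hb).1)
      _ = ((K - 2 : ℕ) : ℝ) * wτ 1 := by
            rw [Finset.sum_const, hcard, nsmul_eq_mul]
      _ = ((K:ℝ) - 2) * wτ 1 := by
            rw [Nat.cast_sub (by omega : 2 ≤ K)]
            norm_num
    have hεwt0 : 2 * ε * wt 0 ≤ wτ 1 := by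
      have h0 := hwτ 0
      rw [hε]
      calc 2 * (wτ 1 / (2 * wτ 0)) * wt 0 = wτ 1 * (wt 0 / wτ 0) := by
            field_simp
      _ ≤ wτ 1 * 1 :=
            mul_le_mul_of_nonneg_left ((div_le_one h0).mpr (hle 0)) (hwτ 1).le
      _ = wτ 1 := mul_one _
    have hN : 2 * ε * wt 0 * wt a + wt a * ST ≤ (K:ℝ) * wτ 1 * wt a := by
      have ha1 := mul_le_mul_of_nonneg_right hεwt0 (hwt a).le
      have hb1 := mul_le_mul_of_nonneg_left hST (hwt a).le
      have hc1 : (0:ℝ) ≤ wτ 1 * wt a := mul_nonneg (hwτ 1).le (hwt a).le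
      linarith only [ha1, hb1, hc1]
    have h4K : (0:ℝ) < Z * (4 * (K:ℝ)^2) :=
      mul_pos hZpos (by positivity)
    have h2K : (0:ℝ) < 2 * (K:ℝ) * wτ 1 :=
      mul_pos (by positivity) (hwτ 1)
    rw [hΞ a ha, hpAa, div_div, div_le_div_iff₀ h4K h2K]
    have step1 : (2 * ε * wt 0 * wt a + wt a * ST) * (2 * K * wτ 1) ≤
        ((K:ℝ) * wτ 1 * wt a) * (2 * K * wτ 1) :=
      mul_le_mul_of_nonneg_right hN h2K.le
    have step2 : 4 * (K:ℝ)^2 * wt a * (wτ 1 ^ 2 / 2) ≤ 4 * (K:ℝ)^2 * wt a * Z :=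
      mul_le_mul_of_nonneg_left hZwτ
        (mul_nonneg (by positivity) (hwt a).le)
    have e1 : ((K:ℝ) * wτ 1 * wt a) * (2 * K * wτ 1) =
        4 * (K:ℝ)^2 * wt a * (wτ 1 ^ 2 / 2) := by ring
    have e2 : wt a * (Z * (4 * (K:ℝ)^2)) = 4 * (K:ℝ)^2 * wt a * Z := by ring
    linarith only [step1, step2, e1, e2]
end

section
/- Consider the deterministic loss sequence on 3 actions over T rounds (T divisible by 3): ℓ_t = (0,1,1) for t ≤ T/3, ℓ_t = (1,0,1) for T/3 < t ≤ 2T/3, ℓ_t = (0,0,1) for 2T/3 < t ≤ T. If Alice plays action 1 on the first third, action 2 on the second third, and action 3 on the last third, then Alice's total loss is T/3 (so she has zero regret against the best single action), yet for any sequence of plays B_1,...,B_T by a second player avoiding collisions with Alice (where a collision gives loss 1), the total loss of Alice and Bob together is at least T, while the best pair of distinct fixed actions has total loss 2T/3; hence the pair regret is at least T/3. -/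
/-!
Alice's schedule always plays the unique zero-loss action during the first two thirds, so on
those rounds Bob either collides with her or picks an action of loss 1; in the last third
Alice's own action has loss 1. Either way the pair pays at least 1 per round, i.e. at least
`3n` in total, whereas actions 0 and 1 together pay 1 per round on the first two thirds only.
-/

open Finset

theorem sum_range_add_ite_lt {M : Type*} [AddCommMonoid M] (m k : ℕ) (x y : M) :
    ∑ t ∈ range (m + k), (if t < m then x else y) = m • x + k • y := by
  rw [sum_range_add, sum_congr rfl fun t ht => if_pos (mem_range.mp ht),
    sum_congr rfl fun t _ => if_neg (Nat.not_lt.mpr (Nat.le_add_right m t))]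
  simp

theorem sum_range_three_mul_ite_lt (n : ℕ) (x y : ℝ) :
    ∑ t ∈ range (3 * n), (if t < 2 * n then x else y) = 2 * n * x + n * y := by
  rw [show 3 * n = 2 * n + n by ring, sum_range_add_ite_lt]
  push_cast [nsmul_eq_mul]
  ring

theorem one_le_add_of_ne {ι : Type*} {ℓ : ι → ℝ} (z : ι) (h0 : ∀ i, 0 ≤ ℓ i)
    (h1 : ∀ i, i ≠ z → 1 ≤ ℓ i) {a b : ι} (hab : a ≠ b) : 1 ≤ ℓ a + ℓ b := by
  by_cases ha : a = z
  · linarith [h0 a, h1 b (ha ▸ hab.symm)]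
  · linarith [h1 a ha, h0 b]

theorem one_le_max_add_max_collision {ι : Type*} [DecidableEq ι] {ℓ : ι → ℝ}
    (h0 : ∀ i, 0 ≤ ℓ i) {a b : ι} (hab : a ≠ b → 1 ≤ ℓ a + ℓ b) :
    1 ≤ max (ℓ a) (if a = b then 1 else 0) + max (ℓ b) (if a = b then 1 else 0) := by
  by_cases h : a = b
  · simp only [if_pos h]
    linarith [le_max_right (ℓ a) 1, le_max_right (ℓ b) 1]
  · simp only [if_neg h, max_eq_left (h0 a), max_eq_left (h0 b)]
    exact hab h

section ThreeStages

variable {n t : ℕ}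

def stageLoss (n t : ℕ) : Fin 3 → ℝ := fun i =>
  if t < n then (if i = 0 then 0 else 1)
  else if t < 2 * n then (if i = 1 then 0 else 1)
  else (if i = 2 then 1 else 0)

def aliceSchedule (n t : ℕ) : Fin 3 :=
  if t < n then 0 else if t < 2 * n then 1 else 2

theorem stageLoss_nonneg (i : Fin 3) : 0 ≤ stageLoss n t i := by
  unfold stageLoss
  split_ifs <;> norm_num

theorem one_le_stageLoss (ht : t < 2 * n) {i : Fin 3} (hi : i ≠ aliceSchedule n t) :
    1 ≤ stageLoss n t i := by
  unfold stageLoss aliceSchedule at *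
  split_ifs at * <;> simp_all

theorem stageLoss_aliceSchedule :
    stageLoss n t (aliceSchedule n t) = if t < 2 * n then 0 else 1 := by
  unfold stageLoss aliceSchedule
  split_ifs <;> first | rfl | omega

theorem stageLoss_zero_add_stageLoss_one :
    stageLoss n t 0 + stageLoss n t 1 = if t < 2 * n then 1 else 0 := by
  unfold stageLoss
  split_ifs <;> first | omega | simp_all

theorem ite_le_stageLoss_add {a b : Fin 3} (hab : a ≠ b) :
    (if t < 2 * n then 1 else 0) ≤ stageLoss n t a + stageLoss n t b := by
  split_ifs with ht
  · exact one_le_add_of_ne _ stageLoss_nonneg (fun i => one_le_stageLoss ht) hab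
  · exact add_nonneg (stageLoss_nonneg a) (stageLoss_nonneg b)

theorem one_le_add_stageLoss_aliceSchedule {b : Fin 3} (hb : aliceSchedule n t ≠ b) :
    1 ≤ stageLoss n t (aliceSchedule n t) + stageLoss n t b := by
  by_cases ht : t < 2 * n
  · exact one_le_add_of_ne _ stageLoss_nonneg (fun i => one_le_stageLoss ht) hb
  · rw [stageLoss_aliceSchedule, if_neg ht]
    exact le_add_of_nonneg_right (stageLoss_nonneg b)

theorem three_mul_le_sum_collisionLoss (B : ℕ → Fin 3) :
    (3 * n : ℝ) ≤ ∑ t ∈ range (3 * n),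
      (max (stageLoss n t (aliceSchedule n t)) (if aliceSchedule n t = B t then 1 else 0) +
        max (stageLoss n t (B t)) (if aliceSchedule n t = B t then 1 else 0)) :=
  calc (3 * n : ℝ) = ∑ _t ∈ range (3 * n), (1 : ℝ) := by simp
    _ ≤ _ := sum_le_sum fun _ _ =>
      one_le_max_add_max_collision stageLoss_nonneg one_le_add_stageLoss_aliceSchedule

end ThreeStages

theorem stmt17_general (n : ℕ) (l : ℕ → Fin 3 → ℝ)
    (hl : ∀ t, l t = fun i =>
      if t < n then (if i = 0 then 0 else 1)
      else if t < 2 * n then (if i = 1 then 0 else 1)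
      else (if i = 2 then 1 else 0))
    (A : ℕ → Fin 3)
    (hA : ∀ t, A t = if t < n then 0 else if t < 2 * n then 1 else 2) :
    (∑ t ∈ Finset.range (3 * n), l t (A t) = (n : ℝ)) ∧
    (∀ B : ℕ → Fin 3,
      (3 * n : ℝ) ≤ ∑ t ∈ Finset.range (3 * n),
        (max (l t (A t)) (if A t = B t then 1 else 0) +
          max (l t (B t)) (if A t = B t then 1 else 0))) ∧
    (∃ a b : Fin 3, a ≠ b ∧
      ∑ t ∈ Finset.range (3 * n), (l t a + l t b) = (2 * n : ℝ)) ∧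
    (∀ a b : Fin 3, a ≠ b →
      (2 * n : ℝ) ≤ ∑ t ∈ Finset.range (3 * n), (l t a + l t b)) ∧
    (∀ B : ℕ → Fin 3,
      (n : ℝ) ≤ (∑ t ∈ Finset.range (3 * n),
        (max (l t (A t)) (if A t = B t then 1 else 0) +
          max (l t (B t)) (if A t = B t then 1 else 0))) - 2 * n) := by
  obtain rfl : l = stageLoss n := funext hl
  obtain rfl : A = aliceSchedule n := funext hA
  refine ⟨?_, three_mul_le_sum_collisionLoss, ⟨0, 1, by decide, ?_⟩, fun a b hab => ?_,
    fun B => ?_⟩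
  · simp only [stageLoss_aliceSchedule, sum_range_three_mul_ite_lt]
    ring
  · simp only [stageLoss_zero_add_stageLoss_one, sum_range_three_mul_ite_lt]
    ring
  · calc (2 * n : ℝ) = ∑ t ∈ range (3 * n), (if t < 2 * n then 1 else 0) := by
          rw [sum_range_three_mul_ite_lt]; ring
      _ ≤ _ := sum_le_sum fun t _ => ite_le_stageLoss_add hab
  · linarith [three_mul_le_sum_collisionLoss (n := n) B]

/-- Low regret for Alice alone does not suffice: on the explicit 3-action loss
sequence (with `T = 3n`), Alice's schedule (action 0, then 1, then 2 on the
thirds) has total loss `n = T/3` (zero regret for her), yet for every sequence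
of plays by Bob (with collisions giving effective loss `1` to both players) the
pair's total effective loss is at least `T = 3n`, while the best fixed pair of
distinct actions has total loss exactly `2n = 2T/3`; hence the pair's regret is
at least `n = T/3`. -/
theorem stmt17 (n : ℕ) (hn : 0 < n) (l : ℕ → Fin 3 → ℝ)
    (hl : ∀ t, l t = fun i =>
      if t < n then (if i = 0 then 0 else 1)
      else if t < 2 * n then (if i = 1 then 0 else 1)
      else (if i = 2 then 1 else 0))
    (A : ℕ → Fin 3)
    (hA : ∀ t, A t = if t < n then 0 else if t < 2 * n then 1 else 2) :
    (∑ t ∈ Finset.range (3 * n), l t (A t) = (n : ℝ)) ∧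
    (∀ B : ℕ → Fin 3,
      (3 * n : ℝ) ≤ ∑ t ∈ Finset.range (3 * n),
        (max (l t (A t)) (if A t = B t then 1 else 0) +
          max (l t (B t)) (if A t = B t then 1 else 0))) ∧
    (∃ a b : Fin 3, a ≠ b ∧
      ∑ t ∈ Finset.range (3 * n), (l t a + l t b) = (2 * n : ℝ)) ∧
    (∀ a b : Fin 3, a ≠ b →
      (2 * n : ℝ) ≤ ∑ t ∈ Finset.range (3 * n), (l t a + l t b)) ∧
    (∀ B : ℕ → Fin 3,
      (n : ℝ) ≤ (∑ t ∈ Finset.range (3 * n),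
        (max (l t (A t)) (if A t = B t then 1 else 0) +
          max (l t (B t)) (if A t = B t then 1 else 0))) - 2 * n) :=
  stmt17_general n l hl A hA
end
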